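/- For any complex numbers v_1,…,v_n, |∏_{k=1}^n (1+v_k)e^{−v_k} − 1 + (1/2)∑_{k=1}^n v_k²| ≤ ((c₁/4) V₂² + c₂ V₃) e^{V₂/2}, where V_m = ∑_{k=1}^n |v_k|^m, c₁ = √e − 1, and c₂ = (1/2)∫_0^1 e^{t²/2}(1−t²) dt. -/

import Mathlib

open Finset


lemma abs_one_add_mul_exp_neg_le (z : ℂ) :
    ‖(1 + z) * Complex.exp (-z)‖ ≤ Real.exp (‖z‖ ^ 2 / 2) := by
  rw [norm_mul, Complex.norm_exp]
  have h2 : ‖1 + z‖ ^ 2 = 1 + (2 * z.re + ‖z‖ ^ 2) := by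
    rw [Complex.sq_norm, Complex.sq_norm, Complex.normSq_apply, Complex.normSq_apply]
    simp [Complex.add_re, Complex.add_im]
    ring
  have h3 : ‖1 + z‖ ≤ Real.exp (z.re + ‖z‖ ^ 2 / 2) := by
    have h4 : ‖1 + z‖ ^ 2 ≤ Real.exp (z.re + ‖z‖ ^ 2 / 2) ^ 2 := by
      rw [h2]
      have h5 : (2 * z.re + ‖z‖ ^ 2) + 1 ≤ Real.exp (2 * z.re + ‖z‖ ^ 2) :=
        Real.add_one_le_exp _
      have h6 : Real.exp (z.re + ‖z‖ ^ 2 / 2) ^ 2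
          = Real.exp (2 * z.re + ‖z‖ ^ 2) := by
        rw [← Real.exp_nat_mul]; ring_nf
      rw [h6]; linarith
    nlinarith [norm_nonneg (1+z), Real.exp_pos (z.re + ‖z‖ ^ 2 / 2)]
  calc ‖1 + z‖ * Real.exp (-z).re
      ≤ Real.exp (z.re + ‖z‖ ^ 2 / 2) * Real.exp (-z).re :=
        mul_le_mul_of_nonneg_right h3 (Real.exp_pos _).le
    _ = Real.exp (‖z‖ ^ 2 / 2) := by
        rw [← Real.exp_add, Complex.neg_re]; ring_nf


lemma key_integral (z : ℂ) :
    (1 + z) * Complex.exp (-z) - (1 - z ^ 2 / 2)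
      = ∫ s in (0:ℝ)..1, z ^ 3 * ((1 - (s:ℂ) ^ 2) / 2) * Complex.exp (-(s:ℂ) * z) := by
  have hderiv : ∀ s ∈ Set.uIcc (0:ℝ) 1,
      HasDerivAt (fun s : ℝ => (1 - z ^ 2 / 2 + z * (s:ℂ) + z ^ 2 * (s:ℂ) ^ 2 / 2)
          * Complex.exp (-(s:ℂ) * z))
        (z ^ 3 * ((1 - (s:ℂ) ^ 2) / 2) * Complex.exp (-(s:ℂ) * z)) s := by
    intro s _
    have hF : HasDerivAt (fun w : ℂ => (1 - z ^ 2 / 2 + z * w + z ^ 2 * w ^ 2 / 2)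
        * Complex.exp (-w * z))
        (z ^ 3 * ((1 - (s:ℂ) ^ 2) / 2) * Complex.exp (-(s:ℂ) * z)) (s:ℂ) := by
      have hP : HasDerivAt (fun w : ℂ => 1 - z ^ 2 / 2 + z * w + z ^ 2 * w ^ 2 / 2)
          (z + z ^ 2 * (s:ℂ)) (s:ℂ) := by
        have h1 : HasDerivAt (fun w : ℂ => z * w) z (s:ℂ) :=
          by simpa using (hasDerivAt_id (s:ℂ)).const_mul z
        have h2 : HasDerivAt (fun w : ℂ => z ^ 2 * w ^ 2 / 2) (z ^ 2 * (s:ℂ)) (s:ℂ) := by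
          have := ((hasDerivAt_pow 2 ((s:ℂ))).const_mul (z ^ 2)).div_const 2
          exact this.congr_deriv (by ring)
        have := ((hasDerivAt_const (s:ℂ) (1 - z ^ 2 / 2)).add h1).add h2
        exact this.congr_deriv (by ring)
      have hE : HasDerivAt (fun w : ℂ => Complex.exp (-w * z)) (-z * Complex.exp (-(s:ℂ) * z)) (s:ℂ) := by
        have h1 : HasDerivAt (fun w : ℂ => -w * z) (-z) (s:ℂ) := by
          simpa using ((hasDerivAt_id ((s:ℂ))).neg.mul_const z)
        simpa [mul_comm] using h1.cexp
      have := hP.mul hE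
      exact this.congr_deriv (by ring)
    exact hF.comp_ofReal
  have hint : IntervalIntegrable
      (fun s : ℝ => z ^ 3 * ((1 - (s:ℂ) ^ 2) / 2) * Complex.exp (-(s:ℂ) * z)) MeasureTheory.volume 0 1 := by
    apply Continuous.intervalIntegrable
    fun_prop
  have := intervalIntegral.integral_eq_sub_of_hasDerivAt hderiv hint
  rw [this]
  push_cast
  ring_nf
  simp [Complex.exp_zero]
  ring

lemma abs_h_le (z : ℂ) :
    ‖(1 + z) * Complex.exp (-z) - (1 - z ^ 2 / 2)‖
      ≤ ((1 / 2) * ∫ t in (0:ℝ)..1, Real.exp (t ^ 2 / 2) * (1 - t ^ 2))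
          * (‖z‖ ^ 3 * Real.exp (‖z‖ ^ 2 / 2)) := by
  rw [key_integral]
  calc ‖∫ s in (0:ℝ)..1, z ^ 3 * ((1 - (s:ℂ) ^ 2) / 2) * Complex.exp (-(s:ℂ) * z)‖
      ≤ ∫ s in (0:ℝ)..1, ‖z ^ 3 * ((1 - (s:ℂ) ^ 2) / 2) * Complex.exp (-(s:ℂ) * z)‖ :=
        intervalIntegral.norm_integral_le_integral_norm (by norm_num)
    _ ≤ ∫ s in (0:ℝ)..1,
          (‖z‖ ^ 3 * Real.exp (‖z‖ ^ 2 / 2)) * (Real.exp (s ^ 2 / 2) * (1 - s ^ 2) / 2) := by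
        apply intervalIntegral.integral_mono_on (by norm_num)
        · apply Continuous.intervalIntegrable; fun_prop
        · apply Continuous.intervalIntegrable; fun_prop
        · intro s hs
          obtain ⟨hs0, hs1⟩ := hs
          rw [norm_mul, norm_mul, norm_pow,
            Complex.norm_exp]
          have h1 : ‖(1 - (s:ℂ) ^ 2) / 2‖ = (1 - s ^ 2) / 2 := by
            rw [show ((1 - (s:ℂ) ^ 2) / 2) = (((1 - s ^ 2) / 2 : ℝ) : ℂ) by push_cast; ring,
              Complex.norm_real, Real.norm_eq_abs, abs_of_nonneg (by nlinarith)]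
          rw [h1]
          have h2 : (-(s:ℂ) * z).re ≤ s ^ 2 / 2 + ‖z‖ ^ 2 / 2 := by
            have : (-(s:ℂ) * z).re = -(s * z.re) := by simp
            rw [this]
            have hre : -z.re ≤ ‖z‖ := by
              have := Complex.abs_re_le_norm z
              rw [abs_le] at this; linarith [this.1]
            nlinarith [mul_le_mul_of_nonneg_left hre hs0, sq_nonneg (s - ‖z‖)]
          have h3 : Real.exp ((-(s:ℂ) * z).re) ≤ Real.exp (s ^ 2 / 2) * Real.exp (‖z‖ ^ 2 / 2) := by
            rw [← Real.exp_add]; exact Real.exp_le_exp.mpr (by linarith)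
          have hnn : 0 ≤ (1 - s ^ 2) / 2 := by nlinarith
          calc ‖z‖ ^ 3 * ((1 - s ^ 2) / 2) * Real.exp ((-(s:ℂ) * z).re)
              ≤ ‖z‖ ^ 3 * ((1 - s ^ 2) / 2) * (Real.exp (s ^ 2 / 2) * Real.exp (‖z‖ ^ 2 / 2)) := by
                apply mul_le_mul_of_nonneg_left h3 (by positivity)
            _ = ‖z‖ ^ 3 * Real.exp (‖z‖ ^ 2 / 2) * (Real.exp (s ^ 2 / 2) * (1 - s ^ 2) / 2) := by
                ring
    _ = (‖z‖ ^ 3 * Real.exp (‖z‖ ^ 2 / 2))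
          * ∫ s in (0:ℝ)..1, (Real.exp (s ^ 2 / 2) * (1 - s ^ 2) / 2) := by
        rw [← intervalIntegral.integral_const_mul]
    _ = ((1 / 2) * ∫ t in (0:ℝ)..1, Real.exp (t ^ 2 / 2) * (1 - t ^ 2))
          * (‖z‖ ^ 3 * Real.exp (‖z‖ ^ 2 / 2)) := by
        rw [show (fun s : ℝ => Real.exp (s ^ 2 / 2) * (1 - s ^ 2) / 2)
            = (fun s : ℝ => (1/2) * (Real.exp (s ^ 2 / 2) * (1 - s ^ 2))) by funext s; ring]
        rw [intervalIntegral.integral_const_mul]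
        ring


lemma prod_sub_prod_le (n : ℕ) (a c : ℕ → ℂ) (M d : ℕ → ℝ)
    (hM : ∀ k, 0 ≤ M k) (ha : ∀ k, ‖a k‖ ≤ M k)
    (hc : ∀ k, ‖c k‖ ≤ M k)
    (hd : ∀ k, ‖a k - c k‖ ≤ d k * M k) (hd0 : ∀ k, 0 ≤ d k) :
    ‖∏ k ∈ range n, a k - ∏ k ∈ range n, c k‖
      ≤ (∑ k ∈ range n, d k) * ∏ k ∈ range n, M k := by
  induction n with
  | zero => simp
  | succ n ih =>
    rw [prod_range_succ, prod_range_succ, prod_range_succ, sum_range_succ]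
    have hsum : 0 ≤ ∑ k ∈ range n, d k := Finset.sum_nonneg fun i _ => hd0 i
    have hprod : 0 ≤ ∏ k ∈ range n, M k := Finset.prod_nonneg fun i _ => hM i
    have key : (∏ k ∈ range n, a k) * a n - (∏ k ∈ range n, c k) * c n
        = ((∏ k ∈ range n, a k) - ∏ k ∈ range n, c k) * a n
          + (∏ k ∈ range n, c k) * (a n - c n) := by ring
    have hcp : ‖∏ k ∈ range n, c k‖ ≤ ∏ k ∈ range n, M k := by
      rw [norm_prod]
      exact Finset.prod_le_prod (fun i _ => norm_nonneg _) (fun i _ => hc i)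
    calc ‖_‖ ≤ ‖((∏ k ∈ range n, a k) - ∏ k ∈ range n, c k) * a n‖
          + ‖(∏ k ∈ range n, c k) * (a n - c n)‖ := by
          rw [key]; exact norm_add_le _ _
      _ = ‖(∏ k ∈ range n, a k) - ∏ k ∈ range n, c k‖ * ‖a n‖
          + ‖∏ k ∈ range n, c k‖ * ‖a n - c n‖ := by
          rw [norm_mul, norm_mul]
      _ ≤ ((∑ k ∈ range n, d k) * ∏ k ∈ range n, M k) * M n
          + (∏ k ∈ range n, M k) * (d n * M n) :=
          add_le_add (mul_le_mul ih (ha n) (norm_nonneg _) (by positivity))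
            (mul_le_mul hcp (hd n) (norm_nonneg _) hprod)
      _ = ((∑ k ∈ range n, d k) + d n) * ((∏ k ∈ range n, M k) * M n) := by ring

lemma abs_prod_one_add_sub_one (n : ℕ) (b : ℕ → ℂ) (w : ℕ → ℝ)
    (hw : ∀ k, ‖b k‖ ≤ w k) :
    ‖∏ k ∈ range n, (1 + b k) - 1‖ ≤ (∏ k ∈ range n, (1 + w k)) - 1 := by
  induction n with
  | zero => simp
  | succ n ih =>
    rw [prod_range_succ, prod_range_succ]
    have hw0 : ∀ k, (0:ℝ) ≤ w k := fun k => (norm_nonneg _).trans (hw k)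
    have key : (∏ k ∈ range n, (1 + b k)) * (1 + b n) - 1
        = ((∏ k ∈ range n, (1 + b k)) - 1) * (1 + b n) + b n := by ring
    have h1 : ‖1 + b n‖ ≤ 1 + w n := by
      calc ‖1 + b n‖ ≤ ‖(1:ℂ)‖ + ‖b n‖ := norm_add_le _ _
        _ ≤ 1 + w n := by simpa using hw n
    calc ‖_‖ ≤ ‖((∏ k ∈ range n, (1 + b k)) - 1) * (1 + b n)‖
          + ‖b n‖ := by rw [key]; exact norm_add_le _ _
      _ = ‖(∏ k ∈ range n, (1 + b k)) - 1‖ * ‖1 + b n‖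
          + ‖b n‖ := by rw [norm_mul]
      _ ≤ ((∏ k ∈ range n, (1 + w k)) - 1) * (1 + w n) + w n := by
          have hP : (1:ℝ) ≤ ∏ k ∈ range n, (1 + w k) := by
            have := Finset.prod_le_prod (s := range n) (f := fun _ : ℕ => (1:ℝ)) (g := fun k => 1 + w k)
              (fun i _ => zero_le_one) (fun i _ => by linarith [hw0 i])
            simpa using this
          exact add_le_add (mul_le_mul ih h1 (norm_nonneg _) (by linarith)) (hw n)
      _ = (∏ k ∈ range n, (1 + w k)) * (1 + w n) - 1 := by ring

lemma abs_prod_one_add_sub_one_sub_sum (n : ℕ) (b : ℕ → ℂ) (w : ℕ → ℝ)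
    (hw : ∀ k, ‖b k‖ ≤ w k) :
    ‖∏ k ∈ range n, (1 + b k) - 1 - ∑ k ∈ range n, b k‖
      ≤ (∏ k ∈ range n, (1 + w k)) - 1 - ∑ k ∈ range n, w k := by
  induction n with
  | zero => simp
  | succ n ih =>
    rw [prod_range_succ, prod_range_succ, sum_range_succ, sum_range_succ]
    have hw0 : ∀ k, (0:ℝ) ≤ w k := fun k => (norm_nonneg _).trans (hw k)
    have key : (∏ k ∈ range n, (1 + b k)) * (1 + b n) - 1 - (∑ k ∈ range n, b k + b n)
        = ((∏ k ∈ range n, (1 + b k)) - 1 - ∑ k ∈ range n, b k)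
          + b n * ((∏ k ∈ range n, (1 + b k)) - 1) := by ring
    calc ‖_‖ ≤ ‖(∏ k ∈ range n, (1 + b k)) - 1 - ∑ k ∈ range n, b k‖
          + ‖b n‖ * ‖(∏ k ∈ range n, (1 + b k)) - 1‖ := by
          rw [key]
          exact (norm_add_le _ _).trans (by rw [norm_mul])
      _ ≤ ((∏ k ∈ range n, (1 + w k)) - 1 - ∑ k ∈ range n, w k)
          + w n * ((∏ k ∈ range n, (1 + w k)) - 1) :=
          add_le_add ih (mul_le_mul (hw n) (abs_prod_one_add_sub_one n b w hw)
            (norm_nonneg _) (hw0 n))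
      _ = (∏ k ∈ range n, (1 + w k)) * (1 + w n) - 1 - (∑ k ∈ range n, w k + w n) := by ring

lemma real_prod_bound (n : ℕ) (w : ℕ → ℝ) (hw : ∀ k, 0 ≤ w k) :
    (∏ k ∈ range n, (1 + w k)) - 1 ≤ (∑ k ∈ range n, w k) * ∏ k ∈ range n, (1 + w k) := by
  induction n with
  | zero => simp
  | succ n ih =>
    rw [prod_range_succ, sum_range_succ]
    have hP : (1:ℝ) ≤ ∏ k ∈ range n, (1 + w k) := by
      have := Finset.prod_le_prod (s := range n) (f := fun _ : ℕ => (1:ℝ)) (g := fun k => 1 + w k)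
        (fun i _ => zero_le_one) (fun i _ => by linarith [hw i])
      simpa using this
    have hS : 0 ≤ ∑ k ∈ range n, w k := Finset.sum_nonneg fun i _ => hw i
    have hx := hw n
    set P := ∏ k ∈ range n, (1 + w k) with hPdef
    set S := ∑ k ∈ range n, w k with hSdef
    set x := w n with hxdef
    nlinarith [mul_nonneg (mul_nonneg hx hS) (by linarith : (0:ℝ) ≤ P),
      mul_nonneg (mul_nonneg hx hx) (by linarith : (0:ℝ) ≤ P)]

lemma real_prod_bound2 (n : ℕ) (w : ℕ → ℝ) (hw : ∀ k, 0 ≤ w k) :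
    (∏ k ∈ range n, (1 + w k)) - 1 - ∑ k ∈ range n, w k
      ≤ (1 / 2) * (∑ k ∈ range n, w k) ^ 2 * ∏ k ∈ range n, (1 + w k) := by
  induction n with
  | zero => simp
  | succ n ih =>
    rw [prod_range_succ, sum_range_succ]
    have hP : (1:ℝ) ≤ ∏ k ∈ range n, (1 + w k) := by
      have := Finset.prod_le_prod (s := range n) (f := fun _ : ℕ => (1:ℝ)) (g := fun k => 1 + w k)
        (fun i _ => zero_le_one) (fun i _ => by linarith [hw i])
      simpa using this
    have hS : 0 ≤ ∑ k ∈ range n, w k := Finset.sum_nonneg fun i _ => hw i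
    have hx := hw n
    have h0 := real_prod_bound n w hw
    set P := ∏ k ∈ range n, (1 + w k) with hPdef
    set S := ∑ k ∈ range n, w k with hSdef
    set x := w n with hxdef
    have hP0 : (0:ℝ) ≤ P := by linarith
    nlinarith [mul_nonneg (mul_nonneg hS hS) (mul_nonneg hx hP0),
      mul_nonneg (mul_nonneg hx hx) hP0,
      mul_nonneg hS (mul_nonneg (mul_nonneg hx hx) hP0),
      mul_nonneg (mul_nonneg (mul_nonneg hx hx) hx) hP0,
      mul_nonneg (mul_nonneg hx hS) hP0]

theorem prod_one_add_mul_exp_neg_second_order (n : ℕ) (v : ℕ → ℂ) :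
    ‖(∏ k ∈ Finset.range n, (1 + v k) * Complex.exp (-v k) - 1
        + (1 / 2) * ∑ k ∈ Finset.range n, v k ^ 2)‖
      ≤ ((Real.sqrt (Real.exp 1) - 1) / 4
            * (∑ k ∈ Finset.range n, ‖v k‖ ^ 2) ^ 2
          + ((1 / 2) * ∫ t in (0:ℝ)..1, Real.exp (t ^ 2 / 2) * (1 - t ^ 2))
              * ∑ k ∈ Finset.range n, ‖v k‖ ^ 3)
          * Real.exp ((∑ k ∈ Finset.range n, ‖v k‖ ^ 2) / 2) := by
  set c2 : ℝ := (1 / 2) * ∫ t in (0:ℝ)..1, Real.exp (t ^ 2 / 2) * (1 - t ^ 2) with hc2def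
  set W : ℝ := ∑ k ∈ Finset.range n, ‖v k‖ ^ 2 with hWdef
  set V3 : ℝ := ∑ k ∈ Finset.range n, ‖v k‖ ^ 3 with hV3def
  have hc2 : 0 ≤ c2 := by
    rw [hc2def]
    have h : 0 ≤ ∫ t in (0:ℝ)..1, Real.exp (t ^ 2 / 2) * (1 - t ^ 2) := by
      apply intervalIntegral.integral_nonneg (by norm_num)
      intro t ht
      have h1 := ht.1
      have h2 := ht.2
      have : (0:ℝ) ≤ 1 - t ^ 2 := by nlinarith
      positivity
    linarith
  -- splitting
  have hb : ∑ k ∈ range n, (-(v k ^ 2) / 2) = -((1/2:ℂ) * ∑ k ∈ range n, v k ^ 2) := by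
    rw [← Finset.sum_div]
    rw [show ∑ k ∈ range n, -(v k ^ 2) = -∑ k ∈ range n, v k ^ 2 from Finset.sum_neg_distrib _]
    ring
  have hsplit : ∏ k ∈ range n, (1 + v k) * Complex.exp (-v k) - 1
        + (1 / 2) * ∑ k ∈ range n, v k ^ 2
      = (∏ k ∈ range n, (1 + v k) * Complex.exp (-v k)
            - ∏ k ∈ range n, (1 + -(v k ^ 2) / 2))
        + (∏ k ∈ range n, (1 + -(v k ^ 2) / 2) - 1 - ∑ k ∈ range n, (-(v k ^ 2) / 2)) := by
    rw [hb]; ring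
  rw [hsplit]
  have habs := norm_add_le
    (∏ k ∈ range n, (1 + v k) * Complex.exp (-v k) - ∏ k ∈ range n, (1 + -(v k ^ 2) / 2))
    (∏ k ∈ range n, (1 + -(v k ^ 2) / 2) - 1 - ∑ k ∈ range n, (-(v k ^ 2) / 2))
  refine le_trans habs ?_
  -- first term
  have habs2 : ∀ k, ‖-(v k ^ 2) / 2‖ = ‖v k‖ ^ 2 / 2 := by
    intro k
    rw [norm_div, norm_neg, norm_pow]
    simp
  have hT1 : ‖∏ k ∈ range n, (1 + v k) * Complex.exp (-v k)
        - ∏ k ∈ range n, (1 + -(v k ^ 2) / 2)‖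
      ≤ (c2 * V3) * Real.exp (W / 2) := by
    have := prod_sub_prod_le n
      (fun k => (1 + v k) * Complex.exp (-v k))
      (fun k => 1 + -(v k ^ 2) / 2)
      (fun k => Real.exp (‖v k‖ ^ 2 / 2))
      (fun k => c2 * ‖v k‖ ^ 3)
      (fun k => (Real.exp_pos _).le)
      (fun k => abs_one_add_mul_exp_neg_le (v k))
      (fun k => by
        calc ‖1 + -(v k ^ 2) / 2‖
            ≤ ‖(1:ℂ)‖ + ‖-(v k ^ 2) / 2‖ := norm_add_le _ _
          _ = 1 + ‖v k‖ ^ 2 / 2 := by rw [habs2 k, norm_one]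
          _ ≤ Real.exp (‖v k‖ ^ 2 / 2) := by
              have := Real.add_one_le_exp (‖v k‖ ^ 2 / 2)
              linarith)
      (fun k => by
        have h := abs_h_le (v k)
        calc ‖(1 + v k) * Complex.exp (-v k) - (1 + -(v k ^ 2) / 2)‖
            = ‖(1 + v k) * Complex.exp (-v k) - (1 - v k ^ 2 / 2)‖ := by
              ring_nf
          _ ≤ c2 * (‖v k‖ ^ 3 * Real.exp (‖v k‖ ^ 2 / 2)) := h
          _ = (c2 * ‖v k‖ ^ 3) * Real.exp (‖v k‖ ^ 2 / 2) := by ring)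
      (fun k => by positivity)
    refine this.trans (le_of_eq ?_)
    rw [← Finset.mul_sum, ← Real.exp_sum, ← Finset.sum_div]
  -- second term
  have hT2 : ‖∏ k ∈ range n, (1 + -(v k ^ 2) / 2) - 1
        - ∑ k ∈ range n, (-(v k ^ 2) / 2)‖
      ≤ (1 / 8) * W ^ 2 * Real.exp (W / 2) := by
    have h1 := abs_prod_one_add_sub_one_sub_sum n
      (fun k => -(v k ^ 2) / 2)
      (fun k => ‖v k‖ ^ 2 / 2)
      (fun k => (habs2 k).le)
    have h2 := real_prod_bound2 n (fun k => ‖v k‖ ^ 2 / 2) (fun k => by positivity)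
    have h3 : ∏ k ∈ range n, (1 + ‖v k‖ ^ 2 / 2)
        ≤ Real.exp (W / 2) := by
      rw [hWdef, Finset.sum_div, Real.exp_sum]
      apply Finset.prod_le_prod (fun i _ => by positivity)
      intro i _
      have := Real.add_one_le_exp (‖v i‖ ^ 2 / 2)
      linarith
    have hsum : ∑ k ∈ range n, ‖v k‖ ^ 2 / 2 = W / 2 := by
      rw [hWdef, Finset.sum_div]
    have hP0 : (0:ℝ) ≤ ∏ k ∈ range n, (1 + ‖v k‖ ^ 2 / 2) :=
      Finset.prod_nonneg fun i _ => by positivity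
    calc ‖_‖ ≤ (∏ k ∈ range n, (1 + ‖v k‖ ^ 2 / 2)) - 1
          - ∑ k ∈ range n, ‖v k‖ ^ 2 / 2 := h1
      _ ≤ (1/2) * (∑ k ∈ range n, ‖v k‖ ^ 2 / 2) ^ 2
          * ∏ k ∈ range n, (1 + ‖v k‖ ^ 2 / 2) := h2
      _ = (1/2) * (W/2) ^ 2 * ∏ k ∈ range n, (1 + ‖v k‖ ^ 2 / 2) := by
          rw [hsum]
      _ ≤ (1/2) * (W/2) ^ 2 * Real.exp (W / 2) := by
          apply mul_le_mul_of_nonneg_left h3 (by positivity)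
      _ = (1/8) * W ^ 2 * Real.exp (W / 2) := by ring
  -- combine
  have hW2 : (0:ℝ) ≤ W ^ 2 := sq_nonneg _
  have hE : (0:ℝ) < Real.exp (W / 2) := Real.exp_pos _
  have hsq : (3/2:ℝ) ≤ Real.sqrt (Real.exp 1) := by
    rw [show (3/2:ℝ) = Real.sqrt ((3/2)^2) from (Real.sqrt_sq (by norm_num)).symm]
    apply Real.sqrt_le_sqrt
    nlinarith [Real.exp_one_gt_d9]
  have h18 : (1/8:ℝ) * W ^ 2 * Real.exp (W / 2)
      ≤ (Real.sqrt (Real.exp 1) - 1) / 4 * W ^ 2 * Real.exp (W / 2) := by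
    apply mul_le_mul_of_nonneg_right _ hE.le
    apply mul_le_mul_of_nonneg_right _ hW2
    linarith
  calc _ ≤ (c2 * V3) * Real.exp (W / 2) + (1/8) * W ^ 2 * Real.exp (W / 2) :=
        add_le_add hT1 hT2
    _ ≤ (c2 * V3) * Real.exp (W / 2)
        + (Real.sqrt (Real.exp 1) - 1) / 4 * W ^ 2 * Real.exp (W / 2) := by linarith
    _ = ((Real.sqrt (Real.exp 1) - 1) / 4 * W ^ 2 + c2 * V3) * Real.exp (W / 2) := by ring
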